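/- arXiv:math/0107186 — 3 statements merged into one kernel-verified Lean document; each statement's English description precedes it below -/
import Mathlib

section
/- Let Ω be a symmetric complex g×g matrix whose imaginary part is not positive definite. Then the Gaussian x ↦ exp(πi x^t Ω x) does not tend to zero at infinity: there is a sequence x_n ∈ ℝ^g with |x_n| → ∞ along which |exp(πi x_n^t Ω x_n)| ≥ 1. In particular this function is not a Schwartz function on ℝ^g. -/
/-! If `Im Ω` is not positive definite there is `y ≠ 0` with `yᵗ (Im Ω) y ≤ 0`. Along the ray
`xₙ = n • y` the Gaussian has modulus `exp (-π n² yᵗ (Im Ω) y) ≥ 1`, whereas a Schwartz function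
tends to `0` at infinity. -/

open Complex Filter Matrix

theorem Matrix.exists_dotProduct_mulVec_nonpos_of_not_posDef {ι : Type*} [Fintype ι]
    {A : Matrix ι ι ℝ} (hA : A.IsSymm) (h : ¬ A.PosDef) :
    ∃ y ≠ 0, y ⬝ᵥ A *ᵥ y ≤ 0 := by
  rw [posDef_iff_dotProduct_mulVec] at h
  push Not at h
  simpa using h (isHermitian_iff_isSymm.mpr hA)

theorem Matrix.im_sum_sum_mul_ofReal {ι : Type*} [Fintype ι] (Ω : Matrix ι ι ℂ) (x : ι → ℝ) :
    (∑ α, ∑ β, Ω α β * (x α : ℂ) * (x β : ℂ)).im = x ⬝ᵥ Ω.map im *ᵥ x := by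
  simp only [im_sum, dotProduct, mulVec, map_apply, Finset.mul_sum]
  refine Finset.sum_congr rfl fun α _ ↦ Finset.sum_congr rfl fun β _ ↦ ?_
  simp only [mul_im, mul_re, ofReal_re, ofReal_im]
  ring

theorem Complex.one_le_norm_exp_pi_mul_I_mul {z : ℂ} (hz : z.im ≤ 0) :
    1 ≤ ‖exp (Real.pi * I * z)‖ := by
  rw [norm_exp, Real.one_le_exp_iff]
  simpa [mul_re] using mul_nonpos_of_nonneg_of_nonpos Real.pi_pos.le hz

theorem tendsto_norm_natCast_smul_atTop {E : Type*} [NormedAddCommGroup E] [NormedSpace ℝ E]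
    {y : E} (hy : y ≠ 0) : Tendsto (fun n : ℕ ↦ ‖(n : ℝ) • y‖) atTop atTop := by
  simp only [norm_smul, Real.norm_natCast]
  exact tendsto_natCast_atTop_atTop.atTop_mul_const (norm_pos_iff.mpr hy)

theorem SchwartzMap.not_forall_one_le_norm_apply {E F : Type*} [NormedAddCommGroup E]
    [NormedSpace ℝ E] [ProperSpace E] [NormedAddCommGroup F] [NormedSpace ℝ F] (f : SchwartzMap E F)
    {x : ℕ → E} (hx : Tendsto (fun n ↦ ‖x n‖) atTop atTop) : ¬ ∀ n, 1 ≤ ‖f (x n)‖ := by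
  intro h
  have hcocompact : Tendsto x atTop (cocompact E) := by
    rwa [← Metric.cobounded_eq_cocompact, ← tendsto_norm_atTop_iff_cobounded]
  have hzero : Tendsto (fun n ↦ ‖f (x n)‖) atTop (nhds 0) := by
    simpa using ((f.tendsto_cocompact).comp hcocompact).norm
  obtain ⟨n, hn⟩ := (hzero.eventually (eventually_lt_nhds one_pos)).exists
  exact (h n).not_gt hn

/-- If `Ω` is a symmetric complex `g × g` matrix whose imaginary part is not
positive definite, then the Gaussian `x ↦ exp(π i xᵗ Ω x)` does not tend to zero at
infinity: there is a sequence `x_n` with `‖x_n‖ → ∞` along which the absolute value of the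
Gaussian is `≥ 1`.  In particular this function is not a Schwartz function on `ℝ^g`. -/
theorem gaussian_not_schwartz_of_not_posDef (g : ℕ) (Ω : Matrix (Fin g) (Fin g) ℂ)
    (hsymm : Ω.IsSymm) (hnpos : ¬ (Ω.map Complex.im).PosDef) :
    (∃ x : ℕ → (Fin g → ℝ),
        Tendsto (fun n => ‖x n‖) atTop atTop ∧
        ∀ n : ℕ, 1 ≤ ‖Complex.exp ((Real.pi : ℂ) * Complex.I *
          ∑ α, ∑ β, Ω α β * ((x n) α : ℂ) * ((x n) β : ℂ))‖) ∧
      ¬ ∃ τ : SchwartzMap (Fin g → ℝ) ℂ,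
          ∀ x : Fin g → ℝ,
            τ x = Complex.exp ((Real.pi : ℂ) * Complex.I *
              ∑ α, ∑ β, Ω α β * (x α : ℂ) * (x β : ℂ)) := by
  obtain ⟨y, hy, hneg⟩ := exists_dotProduct_mulVec_nonpos_of_not_posDef (hsymm.map im) hnpos
  have hgrowth := tendsto_norm_natCast_smul_atTop hy
  have hbound (n : ℕ) : 1 ≤ ‖exp (Real.pi * I *
      ∑ α, ∑ β, Ω α β * (((n : ℝ) • y) α : ℂ) * (((n : ℝ) • y) β : ℂ))‖ := by
    refine one_le_norm_exp_pi_mul_I_mul ?_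
    rw [im_sum_sum_mul_ofReal, mulVec_smul, dotProduct_smul, smul_dotProduct, smul_smul]
    exact smul_nonpos_of_nonneg_of_nonpos (by positivity) hneg
  refine ⟨⟨_, hgrowth, hbound⟩, ?_⟩
  rintro ⟨τ, hτ⟩
  exact τ.not_forall_one_le_norm_apply hgrowth fun n ↦ (hτ _).symm ▸ hbound n
end

section
/- Let Ω be a symmetric complex g×g matrix whose imaginary part is positive definite. Then the function z ↦ θ(z, Ω) is holomorphic (complex differentiable) on all of ℂ^g. -/
open Complex

/-- The theta-function `θ(z, Ω) = Σ_{n ∈ ℤ^g} exp(πi nᵗ Ω n + 2πi nᵗ z)` of `g`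
variables. -/
noncomputable def theta (g : ℕ) (z : Fin g → ℂ) (Ω : Matrix (Fin g) (Fin g) ℂ) : ℂ :=
  ∑' n : Fin g → ℤ,
    Complex.exp ((Real.pi : ℂ) * Complex.I * ∑ α, ∑ β, Ω α β * (n α : ℂ) * (n β : ℂ)
      + 2 * (Real.pi : ℂ) * Complex.I * ∑ α, (n α : ℂ) * z α)

/-!
The `n`-th term of the theta series is `a_n · exp(ℓ_n z)` with `ℓ_n` linear of norm
`≤ 2π Σ |n_α|` and `|a_n| = exp(-π nᵗ (Im Ω) n) ≤ exp(-π c Σ n_α²)`, where `c > 0` comes from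
positive definiteness by compactness of the unit sphere. So for every `R` the sums
`Σ |a_n| exp(R ‖ℓ_n‖)` are dominated by a product of one-variable Gaussian series. This gives a
summable bound for the terms and their derivatives on every ball, and the series can be
differentiated termwise.
-/

open Real

theorem summable_prod_pi_of_nonneg {ι κ : Type*} [Fintype ι] {f : ι → κ → ℝ}
    (hf₀ : ∀ i k, 0 ≤ f i k) (hf : ∀ i, Summable (f i)) :
    Summable fun x : ι → κ => ∏ i, f i (x i) := by
  classical
  refine summable_of_sum_le (c := ∏ i, ∑' k, f i k)
    (fun x => Finset.prod_nonneg fun i _ => hf₀ i (x i)) fun s => ?_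
  calc ∑ x ∈ s, ∏ i, f i (x i)
      ≤ ∑ x ∈ Fintype.piFinset fun i => s.image (· i), ∏ i, f i (x i) :=
        Finset.sum_le_sum_of_subset_of_nonneg
          (fun x hx => Fintype.mem_piFinset.2 fun i => Finset.mem_image_of_mem _ hx)
          fun x _ _ => Finset.prod_nonneg fun i _ => hf₀ i (x i)
    _ = ∏ i, ∑ k ∈ s.image (· i), f i k := (Finset.prod_univ_sum _ _).symm
    _ ≤ ∏ i, ∑' k, f i k :=
        Finset.prod_le_prod (fun i _ => Finset.sum_nonneg fun k _ => hf₀ i k)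
          fun i _ => (hf i).sum_le_tsum _ fun k _ => hf₀ i k

theorem exists_pos_mul_norm_sq_le {E : Type*} [NormedAddCommGroup E] [NormedSpace ℝ E]
    [FiniteDimensional ℝ E] {Q : E → ℝ} (hQc : Continuous Q)
    (hQ : ∀ (c : ℝ) x, Q (c • x) = c ^ 2 * Q x) (hQpos : ∀ x ≠ 0, 0 < Q x) :
    ∃ c > 0, ∀ x, c * ‖x‖ ^ 2 ≤ Q x := by
  obtain ⟨c, hc, hcQ⟩ := (isCompact_sphere (0 : E) 1).exists_forall_le' hQc.continuousOn
    fun x hx => hQpos x (ne_zero_of_mem_unit_sphere ⟨x, hx⟩)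
  refine ⟨c, hc, fun x => ?_⟩
  rcases eq_or_ne x 0 with rfl | hx
  · simp [show Q 0 = 0 by simpa using hQ 0 0]
  have hnx : ‖x‖ ≠ 0 := norm_ne_zero_iff.2 hx
  have hunit : ‖x‖⁻¹ • x ∈ Metric.sphere (0 : E) 1 := by
    simp [norm_smul, hnx]
  calc c * ‖x‖ ^ 2 ≤ Q (‖x‖⁻¹ • x) * ‖x‖ ^ 2 := by gcongr; exact hcQ _ hunit
    _ = Q x := by rw [hQ]; field_simp

open Matrix in
theorem Matrix.PosDef.exists_pos_mul_sum_sq_le {ι : Type*} [Fintype ι] {Y : Matrix ι ι ℝ}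
    (hY : Y.PosDef) : ∃ c > 0, ∀ x : ι → ℝ, c * ∑ i, x i ^ 2 ≤ ∑ i, ∑ j, Y i j * x i * x j := by
  have hquad : ∀ x : ι → ℝ, ∑ i, ∑ j, Y i j * x i * x j = x ⬝ᵥ Y *ᵥ x := by
    intro x
    simp only [dotProduct, Matrix.mulVec, Finset.mul_sum]
    exact Finset.sum_congr rfl fun i _ => Finset.sum_congr rfl fun j _ => by ring
  obtain ⟨c, hc, hcQ⟩ := exists_pos_mul_norm_sq_le
    (E := EuclideanSpace ℝ ι) (Q := fun x => x.ofLp ⬝ᵥ Y *ᵥ x.ofLp) (by fun_prop)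
    (fun c x => by simp only [WithLp.ofLp_smul, Matrix.mulVec_smul, dotProduct_smul,
      smul_dotProduct, smul_eq_mul]; ring)
    (fun x hx => by simpa using hY.dotProduct_mulVec_pos (x := x.ofLp) (by simpa using hx))
  refine ⟨c, hc, fun x => ?_⟩
  simpa [hquad, EuclideanSpace.norm_sq_eq] using hcQ (WithLp.toLp 2 x)

theorem norm_cexp_le_exp_opNorm_mul_norm {E : Type*} [NormedAddCommGroup E] [NormedSpace ℂ E]
    (ℓ : E →L[ℂ] ℂ) (z : E) : ‖cexp (ℓ z)‖ ≤ Real.exp (‖ℓ‖ * ‖z‖) := by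
  rw [norm_exp]
  exact Real.exp_le_exp.2 ((re_le_norm _).trans (ℓ.le_opNorm z))

theorem differentiable_tsum_mul_cexp {ι E : Type*} [NormedAddCommGroup E] [NormedSpace ℂ E]
    (a : ι → ℂ) (ℓ : ι → E →L[ℂ] ℂ)
    (h : ∀ R : ℝ, Summable fun i => ‖a i‖ * Real.exp (R * ‖ℓ i‖)) :
    Differentiable ℂ fun z => ∑' i, a i * cexp (ℓ i z) := by
  intro z₀
  set R := ‖z₀‖ + 1
  have hR : ∀ z ∈ Metric.ball z₀ 1, ‖z‖ ≤ R := fun z hz => by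
    have := norm_le_norm_add_norm_sub' z z₀
    have := mem_ball_iff_norm.1 hz
    linarith
  have hderiv : ∀ i z, HasFDerivAt (fun z => a i * cexp (ℓ i z)) ((a i * cexp (ℓ i z)) • ℓ i) z :=
    fun i z => by simpa [smul_smul] using ((ℓ i).hasFDerivAt.cexp).const_mul (a i)
  have hterm_bound : ∀ i, ∀ z ∈ Metric.ball z₀ 1, ‖a i * cexp (ℓ i z)‖ ≤ ‖a i‖ * Real.exp (R * ‖ℓ i‖) :=
    fun i z hz => by
      rw [norm_mul]
      gcongr
      refine (norm_cexp_le_exp_opNorm_mul_norm _ _).trans (Real.exp_le_exp.2 ?_)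
      rw [mul_comm R]
      gcongr
      exact hR z hz
  have hderiv_bound : ∀ i, ∀ z ∈ Metric.ball z₀ 1,
      ‖(a i * cexp (ℓ i z)) • ℓ i‖ ≤ ‖a i‖ * Real.exp ((R + 1) * ‖ℓ i‖) := fun i z hz => by
    -- `t ≤ exp t` absorbs the factor `‖ℓ i‖` into the exponential
    have hℓ : ‖ℓ i‖ ≤ Real.exp ‖ℓ i‖ := (le_add_of_nonneg_right zero_le_one).trans (add_one_le_exp _)
    calc ‖(a i * cexp (ℓ i z)) • ℓ i‖
        ≤ ‖a i‖ * Real.exp (R * ‖ℓ i‖) * Real.exp ‖ℓ i‖ := by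
          rw [norm_smul]; exact mul_le_mul (hterm_bound i z hz) hℓ (norm_nonneg _) (by positivity)
      _ = ‖a i‖ * Real.exp ((R + 1) * ‖ℓ i‖) := by rw [mul_assoc, ← Real.exp_add]; ring_nf
  have hz₀ : z₀ ∈ Metric.ball z₀ 1 := Metric.mem_ball_self one_pos
  exact (hasFDerivAt_tsum_of_isPreconnected (h (R + 1)) Metric.isOpen_ball
    (convex_ball z₀ 1).isPreconnected (fun i z _ => hderiv i z) hderiv_bound hz₀
    ((h R).of_norm_bounded fun i => hterm_bound i z₀ hz₀) hz₀).differentiableAt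

section ThetaSeries

variable {ι : Type*} [Fintype ι]

noncomputable def thetaCoeff (Ω : Matrix ι ι ℂ) (n : ι → ℤ) : ℂ :=
  cexp (π * I * ∑ α, ∑ β, Ω α β * n α * n β)

noncomputable def thetaFreq (n : ι → ℤ) : (ι → ℂ) →L[ℂ] ℂ :=
  (2 * π * I) • ∑ α, (n α : ℂ) • ContinuousLinearMap.proj α

theorem thetaFreq_apply (n : ι → ℤ) (z : ι → ℂ) :
    thetaFreq n z = 2 * π * I * ∑ α, n α * z α := by
  simp [thetaFreq]

theorem norm_thetaCoeff (Ω : Matrix ι ι ℂ) (n : ι → ℤ) :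
    ‖thetaCoeff Ω n‖ = Real.exp (-π * ∑ α, ∑ β, (Ω α β).im * n α * n β) := by
  simp [thetaCoeff, norm_exp, re_sum, Finset.mul_sum]

theorem norm_thetaFreq_le (n : ι → ℤ) : ‖thetaFreq n‖ ≤ 2 * π * ∑ α, |(n α : ℝ)| := by
  refine ContinuousLinearMap.opNorm_le_bound _ (by positivity) fun z => ?_
  have hsum : ‖∑ α, (n α : ℂ) * z α‖ ≤ (∑ α, |(n α : ℝ)|) * ‖z‖ := by
    rw [Finset.sum_mul]
    refine (norm_sum_le _ _).trans (Finset.sum_le_sum fun α _ => ?_)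
    rw [norm_mul, norm_intCast]
    gcongr
    exact norm_le_pi_norm z α
  calc ‖thetaFreq n z‖ = 2 * π * ‖∑ α, (n α : ℂ) * z α‖ := by
        simp [thetaFreq_apply, abs_of_pos pi_pos]
    _ ≤ 2 * π * ((∑ α, |(n α : ℝ)|) * ‖z‖) := by gcongr
    _ = (2 * π * ∑ α, |(n α : ℝ)|) * ‖z‖ := (mul_assoc _ _ _).symm

theorem summable_norm_thetaCoeff_mul_exp {Ω : Matrix ι ι ℂ} (hpos : (Ω.map Complex.im).PosDef)
    (R : ℝ) : Summable fun n => ‖thetaCoeff Ω n‖ * Real.exp (R * ‖thetaFreq n‖) := by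
  obtain ⟨c, hc, hcQ⟩ := hpos.exists_pos_mul_sum_sq_le
  have hmajorant := summable_prod_pi_of_nonneg (ι := ι)
    (f := fun (_ : ι) (t : ℤ) => Real.exp (-π * (c * t ^ 2 - 2 * |R| * |(t : ℝ)|)))
    (fun _ _ => (Real.exp_pos _).le)
    fun _ => by simpa using summable_pow_mul_jacobiTheta₂_term_bound |R| hc 0
  refine hmajorant.of_nonneg_of_le (fun n => by positivity) fun n => ?_
  have hquad := hcQ fun α => (n α : ℝ)
  have hfreq : R * ‖thetaFreq n‖ ≤ |R| * (2 * π * ∑ α, |(n α : ℝ)|) :=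
    calc R * ‖thetaFreq n‖ ≤ |R| * ‖thetaFreq n‖ := by gcongr; exact le_abs_self R
      _ ≤ |R| * (2 * π * ∑ α, |(n α : ℝ)|) := by gcongr; exact norm_thetaFreq_le n
  simp only [Matrix.map_apply] at hquad
  rw [norm_thetaCoeff, ← Real.exp_add, ← Real.exp_sum, Real.exp_le_exp]
  simp only [Finset.sum_sub_distrib, ← Finset.mul_sum]
  nlinarith [mul_le_mul_of_nonneg_left hquad pi_pos.le]

end ThetaSeries

theorem theta_eq_tsum (g : ℕ) (z : Fin g → ℂ) (Ω : Matrix (Fin g) (Fin g) ℂ) :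
    theta g z Ω = ∑' n, thetaCoeff Ω n * cexp (thetaFreq n z) := by
  simp only [theta, thetaCoeff, thetaFreq_apply, ← Complex.exp_add]

theorem theta_holomorphic_general (g : ℕ) (Ω : Matrix (Fin g) (Fin g) ℂ)
    (hpos : (Ω.map Complex.im).PosDef) :
    Differentiable ℂ (fun z : Fin g → ℂ => theta g z Ω) := by
  simp only [theta_eq_tsum]
  exact differentiable_tsum_mul_cexp _ _ (summable_norm_thetaCoeff_mul_exp hpos)

/-- For `Ω` in the Siegel upper half-space, `z ↦ θ(z, Ω)` is holomorphic
(complex differentiable) on all of `ℂ^g`. -/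
theorem theta_holomorphic (g : ℕ) (Ω : Matrix (Fin g) (Fin g) ℂ)
    (hsymm : Ω.IsSymm) (hpos : (Ω.map Complex.im).PosDef) :
    Differentiable ℂ (fun z : Fin g → ℂ => theta g z Ω) :=
  theta_holomorphic_general g Ω hpos
end

section
/- Let A be a complete normed (Banach) algebra over ℂ and let K_1, …, K_n ∈ A be such that every commutator [K_i, K_j] = K_i K_j − K_j K_i commutes with every K_l (1 ≤ i, j, l ≤ n). Then exp(K_1)·exp(K_2)·⋯·exp(K_n) = exp((1/2) Σ_{i<j} [K_i, K_j]) · exp(K_1 + ⋯ + K_n). -/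
/-!
Write `c = ⁅a, b⁆`. Everything rests on one uniqueness principle: if `F' = M F` and
`H' = -H M`, then `H F` is constant. If `c` commutes with `a`, then
`exp (t a) b - (b + t c) exp (t a)` solves `F' = a F` and vanishes at `t = 0`, while `exp (-t a)`
solves the adjoint equation; hence `exp (t a) b = (b + t c) exp (t a)`. It follows that
`exp (t a) exp (t b)` solves `F' = (a + b + t c) F`. If `c` also commutes with `b`, then
`exp (-t (a + b)) exp (-(t² / 2) c)` solves the adjoint equation, and `t = 1` gives
`exp a exp b = exp (c / 2) exp (a + b)`. The `n`-fold formula follows by induction, splitting off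
the last factor: the new commutators `⁅K i, K n⁆` add up to `⁅K 1 + ⋯ + K (n - 1), K n⁆`, and all
the commutators involved commute with each other.
-/

open NormedSpace

theorem Commute.lie_right {R : Type*} [NonUnitalRing R] {x a b : R} (ha : Commute x a)
    (hb : Commute x b) : Commute x ⁅a, b⁆ := by
  rw [Ring.lie_def]
  exact (ha.mul_right hb).sub_right (hb.mul_right ha)

section LieSum

variable {R : Type*} [NonUnitalNonAssocRing R]

theorem Ring.sum_lie {ι : Type*} (s : Finset ι) (f : ι → R) (b : R) :
    ⁅∑ i ∈ s, f i, b⁆ = ∑ i ∈ s, ⁅f i, b⁆ := by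
  simp only [Ring.lie_def, Finset.sum_mul, Finset.mul_sum, Finset.sum_sub_distrib]

def sumLieLT {n : ℕ} (K : Fin n → R) : R := ∑ i, ∑ j, if i < j then ⁅K i, K j⁆ else 0

theorem sumLieLT_succ {n : ℕ} (K : Fin (n + 1) → R) :
    sumLieLT K = sumLieLT (fun i => K (Fin.castSucc i)) +
      ⁅∑ i, K (Fin.castSucc i), K (Fin.last n)⁆ := by
  have h_last (i : Fin n) : ¬Fin.last n < i.castSucc := (Fin.castSucc_lt_last i).not_gt
  simp [sumLieLT, Fin.sum_univ_castSucc, Finset.sum_add_distrib, Fin.castSucc_lt_last, h_last,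
    Ring.sum_lie]

end LieSum

theorem mul_eq_mul_of_hasDerivAt_adjoint {𝕜 A : Type*} [RCLike 𝕜] [NormedRing A]
    [NormedAlgebra 𝕜 A] {F H M : 𝕜 → A} (hH : ∀ t, HasDerivAt H (-(H t * M t)) t)
    (hF : ∀ t, HasDerivAt F (M t * F t) t) (s t : 𝕜) : H s * F s = H t * F t := by
  have hHF (t : 𝕜) : HasDerivAt (fun t => H t * F t) 0 t :=
    ((hH t).mul (hF t)).congr_deriv (by noncomm_ring)
  exact is_const_of_deriv_eq_zero (fun t => (hHF t).differentiableAt) (fun t => (hHF t).deriv) s t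

section BanachAlgebra

variable {A : Type*} [NormedRing A] [NormedAlgebra ℝ A] [CompleteSpace A]

theorem exp_mul_exp_neg (x : A) : exp x * exp (-x) = 1 := by
  -- `exp` does not depend on the choice of `ℚ`-algebra structure, but its API asks for one.
  let : NormedAlgebra ℚ A := .restrictScalars ℚ ℝ A
  rw [← exp_add_of_commute (Commute.refl x).neg_right, add_neg_cancel, exp_zero]

theorem exp_smul_mul_of_commute_lie {a b : A} (h : Commute ⁅a, b⁆ a) (t : ℝ) :
    exp (t • a) * b = (b + t • ⁅a, b⁆) * exp (t • a) := by
  set c := ⁅a, b⁆ with hc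
  set F : ℝ → A := fun t => exp (t • a) * b - (b + t • c) * exp (t • a) with hF_def
  have hF (t : ℝ) : HasDerivAt F (a * F t) t := by
    have h_lie : a * (b + t • c) = c + (b + t • c) * a := by
      rw [mul_add, add_mul, mul_smul_comm, smul_mul_assoc, ← h.eq, hc, Ring.lie_def]
      abel
    refine (((hasDerivAt_exp_smul_const' a t).mul_const b).sub
      ((((hasDerivAt_id t).smul_const c).const_add b).mul
        (hasDerivAt_exp_smul_const' a t))).congr_deriv ?_
    rw [id, one_smul, hF_def, mul_sub, ← mul_assoc a (b + t • c), h_lie]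
    simp only [add_mul, mul_assoc]
  have hH (t : ℝ) : HasDerivAt (fun t : ℝ => exp (t • -a)) (-(exp (t • -a) * a)) t := by
    simpa using hasDerivAt_exp_smul_const (-a) t
  have hHF : exp (t • -a) * F t = 0 := by
    simpa [hF_def] using mul_eq_mul_of_hasDerivAt_adjoint hH hF t 0
  rw [← sub_eq_zero]
  calc F t = exp (t • a) * (exp (t • -a) * F t) := by
        rw [← mul_assoc, smul_neg, exp_mul_exp_neg, one_mul]
    _ = 0 := by rw [hHF, mul_zero]

theorem exp_mul_exp_of_commute_lie {a b : A} (ha : Commute ⁅a, b⁆ a) (hb : Commute ⁅a, b⁆ b) :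
    exp a * exp b = exp ((2⁻¹ : ℝ) • ⁅a, b⁆) * exp (a + b) := by
  set c := ⁅a, b⁆
  set F : ℝ → A := fun t => exp (t • a) * exp (t • b) with hF_def
  set H : ℝ → A := fun t => exp (t • -(a + b)) * exp ((t ^ 2 / 2) • -c) with hH_def
  have hF (t : ℝ) : HasDerivAt F ((a + b + t • c) * F t) t := by
    refine ((hasDerivAt_exp_smul_const' a t).mul
      (hasDerivAt_exp_smul_const' b t)).congr_deriv ?_
    rw [← mul_assoc (exp (t • a)) b, exp_smul_mul_of_commute_lie ha, hF_def]
    simp only [add_mul, mul_assoc]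
    abel
  have hH (t : ℝ) : HasDerivAt H (-(H t * (a + b + t • c))) t := by
    have h_sq : HasDerivAt (fun t : ℝ => t ^ 2 / 2) t t := by
      simpa using (hasDerivAt_pow 2 t).div_const 2
    have h_comm : Commute (-(a + b)) (exp ((t ^ 2 / 2) • -c)) :=
      ((ha.add_right hb).symm.neg_left.neg_right.smul_right _).exp_right
    refine ((hasDerivAt_exp_smul_const (-(a + b)) t).mul
      ((hasDerivAt_exp_smul_const (-c) _).scomp t h_sq)).congr_deriv ?_
    rw [Function.comp_apply, mul_assoc, h_comm.eq, hH_def]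
    simp only [mul_add, mul_neg, mul_smul_comm, smul_neg, mul_assoc]
    abel
  have hHF : H 1 * F 1 = 1 := by
    simpa [hH_def, hF_def] using mul_eq_mul_of_hasDerivAt_adjoint hH hF 1 0
  have h_inv : exp ((2⁻¹ : ℝ) • c) * exp (a + b) * H 1 = 1 := by
    have h_half : ((1 : ℝ) ^ 2 / 2) • -c = -((2⁻¹ : ℝ) • c) := by norm_num
    simp only [hH_def, one_smul, h_half]
    rw [mul_assoc, ← mul_assoc (exp (a + b)), exp_mul_exp_neg, one_mul, exp_mul_exp_neg]
  calc exp a * exp b = exp ((2⁻¹ : ℝ) • c) * exp (a + b) * H 1 * F 1 := by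
        rw [h_inv, one_mul, hF_def]; simp only [one_smul]
    _ = exp ((2⁻¹ : ℝ) • c) * exp (a + b) := by rw [mul_assoc _ (H 1), hHF, mul_one]

theorem prod_ofFn_exp_of_commute_lie {n : ℕ} (K : Fin n → A)
    (hK : ∀ i j l, Commute ⁅K i, K j⁆ (K l)) :
    (List.ofFn fun i => exp (K i)).prod = exp ((2⁻¹ : ℝ) • sumLieLT K) * exp (∑ i, K i) := by
  induction n with
  | zero => simp [sumLieLT]
  | succ n ih =>
    set S := sumLieLT fun i => K (Fin.castSucc i)
    set B := ∑ i : Fin n, K i.castSucc with hB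
    set x := K (Fin.last n)
    have hS (l : Fin (n + 1)) : Commute S (K l) :=
      Commute.sum_left _ _ _ fun i _ => Commute.sum_left _ _ _ fun j _ => by
        split_ifs
        exacts [hK _ _ l, Commute.zero_left _]
    have hc (l : Fin (n + 1)) : Commute ⁅B, x⁆ (K l) := by
      rw [hB, Ring.sum_lie]
      exact Commute.sum_left _ _ _ fun i _ => hK _ _ l
    have hcB : Commute ⁅B, x⁆ B := Commute.sum_right _ _ _ fun i _ => hc _
    have hSc : Commute S ⁅B, x⁆ := (Commute.sum_right _ _ _ fun i _ => hS _).lie_right (hS _)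
    let : NormedAlgebra ℚ A := .restrictScalars ℚ ℝ A
    rw [List.ofFn_succ', List.prod_concat, ih _ fun i j l => hK _ _ _, mul_assoc,
      exp_mul_exp_of_commute_lie hcB (hc _), ← mul_assoc,
      ← exp_add_of_commute ((hSc.smul_left _).smul_right _), ← smul_add, ← sumLieLT_succ,
      Fin.sum_univ_castSucc]

end BanachAlgebra

/-- In a complete normed algebra over `ℂ`, if all the commutators
`[K_i, K_j] = K_i K_j − K_j K_i` commute with every `K_l`, then
`exp(K₁) ⋯ exp(Kₙ) = exp((1/2) Σ_{i<j} [K_i, K_j]) · exp(K₁ + ⋯ + Kₙ)`. -/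
theorem exp_prod_of_central_commutators (A : Type*) [NormedRing A] [NormedAlgebra ℂ A]
    [CompleteSpace A] (n : ℕ) (K : Fin n → A)
    (hcomm : ∀ i j l : Fin n, Commute (K i * K j - K j * K i) (K l)) :
    (List.ofFn fun i => NormedSpace.exp (K i)).prod =
      NormedSpace.exp
          ((1 / 2 : ℂ) • ∑ i, ∑ j, if i < j then K i * K j - K j * K i else 0) *
        NormedSpace.exp (∑ i, K i) := by
  have h_half : (1 / 2 : ℂ) • (∑ i, ∑ j, if i < j then K i * K j - K j * K i else 0) =
      (2⁻¹ : ℝ) • sumLieLT K := by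
    rw [one_div, ← Complex.ofReal_ofNat, ← Complex.ofReal_inv, Complex.coe_smul]
    rfl
  rw [h_half]
  exact prod_ofFn_exp_of_commute_lie K hcomm
end
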